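/- Fix an integer N > 1. Every KdV subset S can be transformed to the KdV subset S^∅ = ℤ≥0 = {0,1,2,…} by a finite sequence of mutations: there exist m ≥ 0 and KdV subsets S = T₀, T₁, …, T_m = ℤ≥0 such that for each l < m, T_{l+1} = T_l[a] for some element a of the leading term of T_l. -/

import Mathlib

/-!
A KdV subset `S` is determined by its leading term, which holds exactly one representative
`f x` of every residue class `x` mod `N`, and then `S = {y | f ȳ ≤ y}`. Counting `S \ ℤ≥0` and
`ℤ≥0 \ S` class by class shows that `S` has virtual cardinal zero iff `∑ₓ ⌊f x / N⌋ = 0`, which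
forces `∑ₓ f x = N (N - 1) / 2`. Mutating at `f c` moves `f c` to `f c + 1 - N` and every other
representative up by one: this keeps `∑ f` and lowers `∑ f²` by `2N (f c - (N - 1))`. So while
some `f c ≥ N`, mutating there decreases the natural number `∑ f²`; once all `f x < N`, the
quotients `⌊f x / N⌋ ≤ 0` sum to zero, hence vanish, and `S = ℤ≥0`.
-/

/-- A subset `S ⊆ ℤ` is of virtual cardinal zero if both `S \ ℤ≥0` and `ℤ≥0 \ S`
are finite and have the same cardinality. -/
def VirtualCardZero (S : Set ℤ) : Prop :=
  (S \ {n : ℤ | 0 ≤ n}).Finite ∧ ({n : ℤ | 0 ≤ n} \ S).Finite ∧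
    (S \ {n : ℤ | 0 ≤ n}).ncard = ({n : ℤ | 0 ≤ n} \ S).ncard

/-- The shift `S + k = {s + k : s ∈ S}` of a set of integers. -/
def shiftSet (S : Set ℤ) (k : ℤ) : Set ℤ := (fun s => s + k) '' S

/-- A KdV subset (for a fixed `N`): a subset `S ⊆ ℤ` of virtual cardinal zero
such that `S + N ⊆ S`. -/
def IsKdV (N : ℕ) (S : Set ℤ) : Prop :=
  VirtualCardZero S ∧ shiftSet S N ⊆ S

/-- `A` is the leading term of the KdV subset `S`: `A` is an `N`-element set with
`S = A ∪ (S+N)` and `A ∩ (S+N) = ∅`. -/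
def IsLeadingTerm (N : ℕ) (S : Set ℤ) (A : Finset ℤ) : Prop :=
  A.card = N ∧ (↑A : Set ℤ) ∪ shiftSet S N = S ∧ (↑A : Set ℤ) ∩ shiftSet S N = ∅

/-- The mutation `S[a] = {a+1−N} ∪ (S+1)` of a KdV subset `S` at an element `a`
of its leading term. -/
def mutate (N : ℕ) (S : Set ℤ) (a : ℤ) : Set ℤ :=
  {a + 1 - (N : ℤ)} ∪ shiftSet S 1

open Finset Function Relation

theorem mem_shiftSet {S : Set ℤ} {k y : ℤ} : y ∈ shiftSet S k ↔ y - k ∈ S := by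
  simp [shiftSet, sub_eq_add_neg]

theorem Relation.ReflTransGen.exists_seq {α : Type*} {r : α → α → Prop} {a b : α}
    (h : ReflTransGen r a b) :
    ∃ (m : ℕ) (T : ℕ → α), T 0 = a ∧ T m = b ∧ ∀ l < m, r (T l) (T (l + 1)) := by
  induction h using ReflTransGen.head_induction_on with
  | refl => exact ⟨0, fun _ => b, rfl, rfl, fun _ h => absurd h (Nat.not_lt_zero _)⟩
  | @head a c hac _ ih =>
    obtain ⟨m, T, h0, hm, hT⟩ := ih
    refine ⟨m + 1, fun l => if l = 0 then a else T (l - 1), by simp, by simpa using hm,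
      fun l hl => ?_⟩
    rcases l with _ | l
    · simpa [h0] using hac
    · simpa using hT l (by omega)

namespace ZMod

variable {N : ℕ}

theorem le_of_intCast_eq_of_sub_lt {a b : ℤ} (h : (a : ZMod N) = b) (hlt : a - N < b) :
    a ≤ b := by
  obtain ⟨k, hk⟩ := (intCast_eq_intCast_iff_dvd_sub a b N).1 h
  have : 0 < (N : ℤ) * (k + 1) := by linarith
  nlinarith [pos_of_mul_pos_right this (by positivity : (0 : ℤ) ≤ N)]

variable [NeZero N]

theorem intCast_ediv_le_ediv_iff {a b : ℤ} (h : (a : ZMod N) = b) :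
    a / N ≤ b / N ↔ a ≤ b := by
  have hN : (0 : ℤ) < N := by exact_mod_cast Nat.pos_of_neZero N
  have hmod := (intCast_eq_intCast_iff' a b N).1 h
  refine ⟨fun hle => ?_, fun hle => Int.ediv_le_ediv hN hle⟩
  rw [← Int.ediv_mul_add_emod a N, ← Int.ediv_mul_add_emod b N, hmod]
  nlinarith

theorem intCast_mul_add_val (k : ℤ) (x : ZMod N) : ((N * k + x.val : ℤ) : ZMod N) = x := by
  simp

theorem mul_add_val_ediv (k : ℤ) (x : ZMod N) : (N * k + x.val : ℤ) / N = k := by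
  have hN : (N : ℤ) ≠ 0 := by exact_mod_cast NeZero.ne N
  rw [Int.add_comm, Int.add_mul_ediv_left _ _ hN,
    Int.ediv_eq_zero_of_lt (by positivity) (by exact_mod_cast x.val_lt), zero_add]

theorem mul_ediv_add_val (y : ℤ) : N * (y / N) + (y : ZMod N).val = y := by
  rw [val_intCast, Int.mul_ediv_add_emod]

theorem two_mul_sum_val : 2 * ∑ x : ZMod N, (x.val : ℤ) = N * (N - 1) := by
  obtain ⟨n, rfl⟩ : ∃ n, N = n + 1 := Nat.exists_eq_succ_of_ne_zero (NeZero.ne N)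
  have h := Finset.sum_range_id_mul_two (n + 1)
  rw [← Fin.sum_univ_eq_sum_range, add_tsub_cancel_right] at h
  have h' : ((∑ i : Fin (n + 1), (i : ℕ) : ℕ) : ℤ) * 2 = (n + 1) * n := by exact_mod_cast h
  change 2 * ∑ i : Fin (n + 1), ((i : ℕ) : ℤ) = _
  push_cast at h' ⊢
  linarith

end ZMod

theorem isKdV_nonneg (N : ℕ) : IsKdV N {n | 0 ≤ n} :=
  ⟨by simp [VirtualCardZero], fun y hy => by
    rw [mem_shiftSet, Set.mem_ofPred_eq] at hy
    exact le_trans hy (by simp)⟩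

def MutationStep (N : ℕ) (S S' : Set ℤ) : Prop :=
  IsKdV N S ∧ ∃ (A : Finset ℤ) (a : ℤ), IsLeadingTerm N S A ∧ a ∈ A ∧ S' = mutate N S a

namespace IsKdV

variable {N : ℕ} {S : Set ℤ}

theorem add_mul_mem (hS : IsKdV N S) {y : ℤ} (hy : y ∈ S) (k : ℕ) : y + N * k ∈ S := by
  induction k with
  | zero => simpa using hy
  | succ k ih => exact hS.2 (mem_shiftSet.2 (by convert ih using 1; push_cast; ring))

theorem bddBelow (hS : IsKdV N S) : BddBelow S :=
  (hS.1.1.bddBelow.union (bddBelow_Ici (a := (0 : ℤ)))).mono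
    (Set.subset_sdiff_union S {n | 0 ≤ n})

theorem exists_mem_intCast_eq [NeZero N] (hS : IsKdV N S) (x : ZMod N) :
    ∃ y ∈ S, (y : ZMod N) = x := by
  obtain ⟨b, hb⟩ := hS.1.2.1.bddAbove
  have hN : (1 : ℤ) ≤ N := by exact_mod_cast Nat.one_le_iff_ne_zero.2 (NeZero.ne N)
  have hval : (0 : ℤ) ≤ x.val := by positivity
  have hby : b < N * (max b 0 + 1) + x.val := by nlinarith [le_max_left b 0, le_max_right b 0]
  have hy : 0 ≤ N * (max b 0 + 1) + (x.val : ℤ) := by nlinarith [le_max_right b 0]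
  exact ⟨_, by_contra fun hyS => hby.not_ge (hb ⟨hy, hyS⟩), ZMod.intCast_mul_add_val _ x⟩

end IsKdV

section

variable {N : ℕ} {f : ZMod N → ℤ}

/-- When `f` picks a representative of every residue class mod `N` (`LeftInverse (↑) f`), this is
the KdV subset whose leading term is the range of `f`. -/
def kdvOf (N : ℕ) (f : ZMod N → ℤ) : Set ℤ := {y | f y ≤ y}

/-- The representatives after mutating at `f c`, indexed by their new residue classes. -/
def mutateLead (N : ℕ) (f : ZMod N → ℤ) (c x : ZMod N) : ℤ :=
  f (x - 1) + 1 - if x - 1 = c then (N : ℤ) else 0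

theorem leftInverse_mutateLead (hf : LeftInverse (↑) f) (c : ZMod N) :
    LeftInverse (↑) (mutateLead N f c) := by
  intro x
  simp only [mutateLead]
  split_ifs <;> simp [hf (x - 1)]

theorem mutate_kdvOf (hf : LeftInverse (↑) f) (c : ZMod N) :
    mutate N (kdvOf N f) (f c) = kdvOf N (mutateLead N f c) := by
  ext y
  simp only [mutate, Set.mem_union, Set.mem_singleton_iff, mem_shiftSet, kdvOf, mutateLead,
    Set.mem_ofPred_eq, Int.cast_sub, Int.cast_one]
  split_ifs with hc
  · subst hc
    have hcast : ((f (y - 1) + 1 : ℤ) : ZMod N) = y := by push_cast; rw [hf]; ring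
    refine ⟨by omega, fun hle => ?_⟩
    rcases hle.eq_or_lt with h | h
    · exact Or.inl h.symm
    · exact Or.inr (by linarith [ZMod.le_of_intCast_eq_of_sub_lt hcast (by linarith)])
  · have hy : y ≠ f c + 1 - N := by
      rintro rfl
      simp [hf c] at hc
    simp only [hy, false_or, sub_zero]
    omega

variable [NeZero N]

noncomputable def residueBlocks (N : ℕ) [NeZero N] (u v : ZMod N → ℤ) : Finset ℤ :=
  univ.biUnion fun x => (Ico (u x) (v x)).image fun k => N * k + x.val

theorem mem_residueBlocks {u v : ZMod N → ℤ} {y : ℤ} :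
    y ∈ residueBlocks N u v ↔ u y ≤ y / N ∧ y / N < v y := by
  simp only [residueBlocks, mem_biUnion, mem_univ, true_and, mem_image, mem_Ico]
  constructor
  · rintro ⟨x, k, hk, rfl⟩
    rwa [ZMod.intCast_mul_add_val, ZMod.mul_add_val_ediv]
  · exact fun hy => ⟨y, y / N, hy, ZMod.mul_ediv_add_val y⟩

theorem card_residueBlocks (u v : ZMod N → ℤ) :
    #(residueBlocks N u v) = ∑ x, (v x - u x).toNat := by
  have hN : (N : ℤ) ≠ 0 := by exact_mod_cast NeZero.ne N
  rw [residueBlocks, card_biUnion]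
  · refine sum_congr rfl fun x _ => ?_
    rw [card_image_of_injective _ fun k l h => ?_, Int.card_Ico]
    exact mul_left_cancel₀ hN (add_right_cancel h)
  · intro x _ x' _ hne
    simp only [Function.onFun, disjoint_left, mem_image]
    rintro _ ⟨k, -, rfl⟩ ⟨k', -, h⟩
    apply hne
    rw [← ZMod.intCast_mul_add_val k x, ← h, ZMod.intCast_mul_add_val]

theorem kdvOf_eq_setOf_ediv (hf : LeftInverse (↑) f) :
    kdvOf N f = {y : ℤ | f y / (N : ℤ) ≤ y / N} := by
  ext y
  exact (ZMod.intCast_ediv_le_ediv_iff (by rw [hf])).symm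

theorem kdvOf_diff_nonneg (hf : LeftInverse (↑) f) :
    kdvOf N f \ {n | 0 ≤ n} = residueBlocks N (fun x => f x / N) 0 := by
  ext y
  have hN : (0 : ℤ) < N := by exact_mod_cast Nat.pos_of_neZero N
  have hneg : y / N < 0 ↔ y < 0 := by
    simpa only [not_le] using (Int.ediv_nonneg_iff_of_pos hN).not
  simp only [kdvOf_eq_setOf_ediv hf, mem_coe, mem_residueBlocks, Set.mem_sdiff,
    Set.mem_ofPred_eq, not_le, Pi.zero_apply, hneg]

theorem nonneg_diff_kdvOf (hf : LeftInverse (↑) f) :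
    {n | 0 ≤ n} \ kdvOf N f = residueBlocks N 0 (fun x => f x / N) := by
  ext y
  have hN : (0 : ℤ) < N := by exact_mod_cast Nat.pos_of_neZero N
  simp only [kdvOf_eq_setOf_ediv hf, mem_coe, mem_residueBlocks, Set.mem_sdiff,
    Set.mem_ofPred_eq, not_le, Pi.zero_apply, Int.ediv_nonneg_iff_of_pos hN]

theorem virtualCardZero_kdvOf_iff (hf : LeftInverse (↑) f) :
    VirtualCardZero (kdvOf N f) ↔ ∑ x, f x / N = 0 := by
  have hsplit : ∑ x, f x / N =
      (∑ x, (f x / N - 0).toNat : ℕ) - (∑ x, (0 - f x / N).toNat : ℕ) := by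
    push_cast
    rw [← sum_sub_distrib]
    exact sum_congr rfl fun x _ => by simp
  simp only [VirtualCardZero, kdvOf_diff_nonneg hf, nonneg_diff_kdvOf hf, Set.ncard_coe_finset,
    card_residueBlocks, finite_toSet, true_and, Pi.zero_apply]
  omega

theorem mem_image_univ_iff_apply_eq (hf : LeftInverse (↑) f) {y : ℤ} :
    y ∈ univ.image f ↔ f y = y := by
  simp only [mem_image, mem_univ, true_and]
  constructor
  · rintro ⟨x, rfl⟩
    rw [hf x]
  · exact fun h => ⟨y, h⟩

theorem mem_shiftSet_kdvOf_iff (hf : LeftInverse (↑) f) {y : ℤ} :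
    y ∈ shiftSet (kdvOf N f) N ↔ f y < y := by
  have hN : (0 : ℤ) < N := by exact_mod_cast Nat.pos_of_neZero N
  simp only [mem_shiftSet, kdvOf, Set.mem_ofPred_eq, Int.cast_sub, Int.cast_natCast,
    ZMod.natCast_self, sub_zero]
  refine ⟨fun h => by linarith, fun h => ?_⟩
  by_contra! hlt
  exact h.not_ge (ZMod.le_of_intCast_eq_of_sub_lt (by rw [hf]) hlt)

theorem isKdV_kdvOf (hf : LeftInverse (↑) f) (hq : ∑ x, f x / (N : ℤ) = 0) :
    IsKdV N (kdvOf N f) :=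
  ⟨(virtualCardZero_kdvOf_iff hf).2 hq,
    fun _ hy => le_of_lt ((mem_shiftSet_kdvOf_iff hf).1 hy)⟩

theorem isLeadingTerm_kdvOf (hf : LeftInverse (↑) f) :
    IsLeadingTerm N (kdvOf N f) (univ.image f) := by
  refine ⟨?_, ?_, ?_⟩
  · rw [card_image_of_injective _ hf.injective, card_univ, ZMod.card]
  · ext y
    simp only [Set.mem_union, mem_coe, mem_image_univ_iff_apply_eq hf, mem_shiftSet_kdvOf_iff hf]
    exact le_iff_eq_or_lt.symm
  · ext y
    simp only [Set.mem_inter_iff, mem_coe, mem_image_univ_iff_apply_eq hf,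
      mem_shiftSet_kdvOf_iff hf, Set.mem_empty_iff_false, iff_false, not_and]
    exact fun h => h.not_lt

theorem sum_comp_mutateLead (g : ℤ → ℤ) (c : ZMod N) :
    ∑ x, g (mutateLead N f c x) = ∑ x, g (f x + 1 - if x = c then (N : ℤ) else 0) :=
  (Equiv.subRight (1 : ZMod N)).sum_comp fun x => g (f x + 1 - if x = c then (N : ℤ) else 0)

theorem sum_mutateLead (c : ZMod N) : ∑ x, mutateLead N f c x = ∑ x, f x := by
  rw [sum_comp_mutateLead (fun z => z)]
  simp [sum_sub_distrib, sum_add_distrib, ZMod.card]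

theorem sum_sq_mutateLead (c : ZMod N) :
    ∑ x, mutateLead N f c x ^ 2 =
      ∑ x, f x ^ 2 + 2 * ∑ x, f x + N + N ^ 2 - 2 * N * (f c + 1) := by
  rw [sum_comp_mutateLead (· ^ 2)]
  have hterm : ∀ x, (f x + 1 - if x = c then (N : ℤ) else 0) ^ 2 =
      f x ^ 2 + 2 * f x + 1 - if x = c then 2 * N * (f c + 1) - N ^ 2 else 0 := by
    intro x
    split_ifs with h
    · subst h; ring
    · ring
  simp only [hterm, sum_sub_distrib, sum_add_distrib, sum_ite_eq', mem_univ, if_true, ← mul_sum]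
  simp [ZMod.card]
  ring

theorem sum_eq_mul_sum_ediv_add (hf : LeftInverse (↑) f) :
    ∑ x, f x = N * ∑ x, f x / (N : ℤ) + ∑ x : ZMod N, (x.val : ℤ) := by
  rw [mul_sum, ← sum_add_distrib]
  refine sum_congr rfl fun x _ => ?_
  conv_lhs => rw [← ZMod.mul_ediv_add_val (N := N) (f x), hf x]

theorem sum_ediv_mutateLead (hf : LeftInverse (↑) f) (c : ZMod N) :
    ∑ x, mutateLead N f c x / (N : ℤ) = ∑ x, f x / (N : ℤ) := by
  have h := sum_mutateLead (f := f) c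
  rw [sum_eq_mul_sum_ediv_add hf, sum_eq_mul_sum_ediv_add (leftInverse_mutateLead hf c),
    add_left_inj] at h
  exact mul_left_cancel₀ (by exact_mod_cast NeZero.ne N) h

theorem sum_sq_mutateLead_of_sum_ediv_eq_zero (hf : LeftInverse (↑) f)
    (hq : ∑ x, f x / (N : ℤ) = 0) (c : ZMod N) :
    ∑ x, mutateLead N f c x ^ 2 = ∑ x, f x ^ 2 - 2 * N * (f c - (N - 1)) := by
  have hsum : 2 * ∑ x, f x = N * (N - 1) := by
    rw [sum_eq_mul_sum_ediv_add hf, hq, mul_zero, zero_add, ZMod.two_mul_sum_val]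
  rw [sum_sq_mutateLead, hsum]
  ring

theorem kdvOf_eq_nonneg (hf : LeftInverse (↑) f) (hq : ∑ x, f x / (N : ℤ) = 0)
    (hlt : ∀ x, f x < N) : kdvOf N f = {n | 0 ≤ n} := by
  have hN : (0 : ℤ) < N := by exact_mod_cast Nat.pos_of_neZero N
  have hnonpos : ∀ x ∈ univ, f x / (N : ℤ) ≤ 0 := fun x _ => by
    have := (Int.ediv_lt_iff_lt_mul hN).2 (by rw [one_mul]; exact hlt x)
    omega
  have hzero := (sum_eq_zero_iff_of_nonpos hnonpos).1 hq
  ext y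
  simp [kdvOf_eq_setOf_ediv hf, hzero, Int.ediv_nonneg_iff_of_pos hN]

theorem IsKdV.exists_eq_kdvOf {S : Set ℤ} (hS : IsKdV N S) :
    ∃ f : ZMod N → ℤ, LeftInverse (↑) f ∧ S = kdvOf N f := by
  obtain ⟨b, hb⟩ := hS.bddBelow
  have hleast (x : ZMod N) : ∃ a, (a ∈ S ∧ (a : ZMod N) = x) ∧
      ∀ z, z ∈ S ∧ (z : ZMod N) = x → a ≤ z :=
    Int.exists_least_of_bdd ⟨b, fun z hz => hb hz.1⟩ (hS.exists_mem_intCast_eq x)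
  choose f hf hle using hleast
  refine ⟨f, fun x => (hf x).2, Set.ext fun y => ⟨fun hy => hle _ y ⟨hy, rfl⟩, fun hy => ?_⟩⟩
  obtain ⟨k, hk⟩ := (ZMod.intCast_eq_intCast_iff_dvd_sub (f y) y N).1 (hf y).2
  have hN : (0 : ℤ) < N := by exact_mod_cast Nat.pos_of_neZero N
  lift k to ℕ using by nlinarith [show f y ≤ y from hy]
  simpa [← hk] using hS.add_mul_mem (hf y).1 k

theorem reflTransGen_mutationStep_kdvOf (hf : LeftInverse (↑) f)
    (hq : ∑ x, f x / (N : ℤ) = 0) :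
    ReflTransGen (MutationStep N) (kdvOf N f) {n | 0 ≤ n} := by
  induction hΦ : (∑ x, f x ^ 2).toNat using Nat.strong_induction_on generalizing f with
  | _ n ih =>
  by_cases hlt : ∀ x, f x < N
  · rw [kdvOf_eq_nonneg hf hq hlt]
  obtain ⟨c, hc⟩ := not_forall.1 hlt
  have hstep : MutationStep N (kdvOf N f) (kdvOf N (mutateLead N f c)) :=
    ⟨isKdV_kdvOf hf hq, _, f c, isLeadingTerm_kdvOf hf, mem_image_of_mem f (mem_univ c),
      (mutate_kdvOf hf c).symm⟩
  refine .head hstep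
    (ih _ ?_ (leftInverse_mutateLead hf c) ((sum_ediv_mutateLead hf c).trans hq) rfl)
  have hN : (0 : ℤ) < N := by exact_mod_cast Nat.pos_of_neZero N
  have hdecr := sum_sq_mutateLead_of_sum_ediv_eq_zero hf hq c
  have hnonneg : 0 ≤ ∑ x, mutateLead N f c x ^ 2 := sum_nonneg fun _ _ => sq_nonneg _
  rw [← hΦ, Int.toNat_lt_toNat (by nlinarith)]
  nlinarith

end

/-- Fix `N > 1`.  Every KdV subset `S` can be transformed to the KdV
subset `S^∅ = ℤ≥0` by a finite sequence of mutations: there are `m ≥ 0` and KdV subsets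
`S = T₀, T₁, …, T_m = ℤ≥0` such that for each `l < m`, `T_{l+1} = T_l[a]` for some
element `a` of the leading term of `T_l`. -/
theorem kdv_mutations_reach_trivial (N : ℕ) (hN : 1 < N) (S : Set ℤ) (hS : IsKdV N S) :
    ∃ (m : ℕ) (T : ℕ → Set ℤ), T 0 = S ∧ T m = {n : ℤ | 0 ≤ n} ∧
      (∀ l ≤ m, IsKdV N (T l)) ∧
      ∀ l < m, ∃ (A : Finset ℤ) (a : ℤ),
        IsLeadingTerm N (T l) A ∧ a ∈ A ∧ T (l + 1) = mutate N (T l) a := by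
  have : NeZero N := ⟨by omega⟩
  obtain ⟨f, hf, rfl⟩ := hS.exists_eq_kdvOf
  obtain ⟨m, T, h0, hm, hT⟩ :=
    (reflTransGen_mutationStep_kdvOf hf ((virtualCardZero_kdvOf_iff hf).1 hS.1)).exists_seq
  refine ⟨m, T, h0, hm, fun l hl => ?_, fun l hl => (hT l hl).2⟩
  rcases hl.lt_or_eq with hl | rfl
  · exact (hT l hl).1
  · exact hm ▸ isKdV_nonneg N
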